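/- Let f, g : S → ℝ with g(x) > 0 for all x in a set S, and let γ = sup_{x∈S} f(x)/g(x) be attained at some x* ∈ S. Then x₀ ∈ S maximizes f(x)/g(x) over S if and only if x₀ maximizes f(x) − γ g(x) over S (in which case the maximum of the latter is 0). -/
import Mathlib


/-- Dinkelbach equivalence: if γ is the attained supremum of f/g
over S (with g > 0), then x₀ maximizes f/g iff x₀ maximizes f − γ·g, in which
case the maximum of the latter is 0. -/
theorem stmt_11 {S : Type*} (f g : S → ℝ) (hg : ∀ x, 0 < g x) (γ : ℝ)
    (hγ : IsGreatest (Set.range fun x => f x / g x) γ) (x₀ : S) :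
    (∀ x, f x / g x ≤ f x₀ / g x₀) ↔
      ((∀ x, f x - γ * g x ≤ f x₀ - γ * g x₀) ∧ f x₀ - γ * g x₀ = 0) := by
  obtain ⟨⟨xs, hxs⟩, hub⟩ := hγ
  have hle : ∀ x, f x - γ * g x ≤ 0 := by
    intro x
    have h := hub ⟨x, rfl⟩
    have := (div_le_iff₀ (hg x)).mp h
    linarith
  constructor
  · intro hmax
    have h1 : γ ≤ f x₀ / g x₀ := hxs ▸ hmax xs
    have h2 : f x₀ / g x₀ ≤ γ := hub ⟨x₀, rfl⟩
    have heq : f x₀ / g x₀ = γ := le_antisymm h2 h1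
    have hz : f x₀ - γ * g x₀ = 0 := by
      have := (div_eq_iff (hg x₀).ne').mp heq
      linarith
    exact ⟨fun x => hz ▸ hle x, hz⟩
  · rintro ⟨_, hz⟩ x
    have heq : f x₀ / g x₀ = γ := by
      rw [div_eq_iff (hg x₀).ne']
      linarith
    rw [heq]
    exact hub ⟨x, rfl⟩
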